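/- Measure decay estimate for axisymmetric functions in ℝ⁵: there is a constant C such that for every axisymmetric φ ∈ H¹₀(B) (B ⊂ ℝ⁵ a ball) and every r₀ > 0, the one-dimensional Lebesgue measure |{z ∈ ℝ : φ(z, r₀) ≥ 1/2}| ≤ C r₀⁻³ ‖φ‖_{H¹₀(B)}^{8/3}, where φ(z,r) denotes φ at the point with axial coordinate z and radius r. -/

import Mathlib

open Real MeasureTheory

noncomputable section

/-- Euclidean `ℝ⁵`. -/
abbrev E5 := EuclideanSpace ℝ (Fin 5)

/-- Radius `r = |y'|` of `y = (y₁, y') ∈ ℝ × ℝ⁴ = ℝ⁵`. -/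
def rho5 (y : E5) : ℝ := Real.sqrt ((y 1) ^ 2 + (y 2) ^ 2 + (y 3) ^ 2 + (y 4) ^ 2)

/-- `|∇φ|²` on `ℝ⁵`. -/
def gradsq5 (φ : E5 → ℝ) (y : E5) : ℝ :=
  ∑ i : Fin 5, (fderiv ℝ φ y (EuclideanSpace.single i 1)) ^ 2

/-- The point of `ℝ⁵` with axial coordinate `a` and transverse part `w ∈ ℝ⁴`. -/
def pt5 (a : ℝ) (w : Fin 4 → ℝ) : E5 :=
  (WithLp.equiv 2 (Fin 5 → ℝ)).symm (Fin.cons a w)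

/-! Put `u = |φ| ^ (8/3)`, a `C¹` axisymmetric function with `|∇u| ≤ (8/3) |φ| ^ (5/3) |∇φ|`.
On each slice `{z} × ℝ⁴` it is radial, so `u(z, r₀) = -∫_{r₀}^∞ ∂ᵣu dr ≤ r₀⁻³ ∫_{r₀}^∞ |∂ᵣu| r³ dr`,
and in polar coordinates of `ℝ⁴` the last integral is a multiple of `∫_{|w| > r₀} |∇u(z, w)| dw`.
Integrating in `z` bounds `∫ u(z, r₀) dz` by `r₀⁻³ ∫_{ℝ⁵} |φ| ^ (5/3) |∇φ|`, which Cauchy–Schwarz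
and the Sobolev inequality `‖φ‖_{10/3} ≲ ‖∇φ‖₂` bound by `‖∇φ‖₂ ^ (8/3)`. Chebyshev's inequality
for `u` at level `2 ^ (-8/3)` concludes. -/

open scoped NNReal Topology
open Set Filter Metric Module Topology

theorem meas_ge_le_ofReal_integral_div {α : Type*} [MeasurableSpace α] {μ : Measure α}
    {g : α → ℝ} (hg : Integrable g μ) (hg0 : 0 ≤ᵐ[μ] g) {c : ℝ} (hc : 0 < c) :
    μ {x | c ≤ g x} ≤ ENNReal.ofReal ((∫ x, g x ∂μ) / c) := by
  calc μ {x | c ≤ g x} ≤ μ {x | ENNReal.ofReal c ≤ ENNReal.ofReal (g x)} :=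
        measure_mono fun x hx => ENNReal.ofReal_le_ofReal hx
    _ ≤ (∫⁻ x, ENNReal.ofReal (g x) ∂μ) / ENNReal.ofReal c :=
        meas_ge_le_lintegral_div hg.aemeasurable.ennreal_ofReal (by simpa using hc)
          ENNReal.ofReal_ne_top
    _ = ENNReal.ofReal ((∫ x, g x ∂μ) / c) := by
        rw [← ofReal_integral_eq_lintegral_ofReal hg hg0,
          ENNReal.ofReal_div_of_pos hc]

theorem abs_le_integral_Ioi_abs_deriv_mul_pow {f : ℝ → ℝ} (hf : ContDiff ℝ 1 f)
    (hfs : HasCompactSupport f) {r₀ : ℝ} (hr₀ : 0 < r₀) (k : ℕ) :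
    |f r₀| ≤ (r₀ ^ k)⁻¹ * ∫ r in Ioi r₀, |deriv f r| * r ^ k := by
  have hint : Integrable fun r => |deriv f r| * r ^ k :=
    ((hf.continuous_deriv le_rfl).abs.mul (continuous_pow k)).integrable_of_hasCompactSupport
      (hfs.deriv.abs.mul_right)
  calc |f r₀| = |∫ r in Ioi r₀, deriv f r| := by
        rw [hfs.integral_Ioi_deriv_eq hf, abs_neg]
    _ ≤ ∫ r in Ioi r₀, |deriv f r| := abs_integral_le_integral_abs
    _ ≤ ∫ r in Ioi r₀, (r₀ ^ k)⁻¹ * (|deriv f r| * r ^ k) := by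
        refine setIntegral_mono_on ?_ (hint.const_mul _).integrableOn measurableSet_Ioi
          fun r hr => ?_
        · exact ((hf.continuous_deriv le_rfl).abs.integrable_of_hasCompactSupport
            hfs.deriv.abs).integrableOn
        · rw [le_inv_mul_iff₀ (by positivity), mul_comm]
          gcongr
          exact hr.le
    _ = (r₀ ^ k)⁻¹ * ∫ r in Ioi r₀, |deriv f r| * r ^ k := integral_const_mul _ _

theorem abs_deriv_le_norm_fderiv_of_radial {F : Type*} [NormedAddCommGroup F] [NormedSpace ℝ F]
    {v : F → ℝ} {f : ℝ → ℝ} (hvf : ∀ w, v w = f ‖w‖) {w : F} (hw : w ≠ 0)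
    (hv : DifferentiableAt ℝ v w) : |deriv f ‖w‖| ≤ ‖fderiv ℝ v w‖ := by
  set e := ‖w‖⁻¹ • w
  have he : ‖e‖ = 1 := norm_smul_inv_norm hw
  have hwe : ‖w‖ • e = w := smul_inv_smul₀ (norm_ne_zero_iff.2 hw) w
  have hline : f =ᶠ[𝓝 ‖w‖] fun t => v (t • e) := by
    filter_upwards [lt_mem_nhds (norm_pos_iff.2 hw)] with t ht
    rw [hvf, norm_smul, he, mul_one, Real.norm_of_nonneg ht.le]
  have hderiv : HasDerivAt (fun t => v (t • e)) (fderiv ℝ v w e) ‖w‖ := by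
    have := (hasDerivAt_id ‖w‖).smul_const e
    rw [one_smul] at this
    have hv' : HasFDerivAt v (fderiv ℝ v w) (‖w‖ • e) := by rw [hwe]; exact hv.hasFDerivAt
    exact hv'.comp_hasDerivAt _ this
  rw [hline.deriv_eq, hderiv.deriv]
  simpa [he] using (fderiv ℝ v w).le_opNorm e

theorem integral_indicator_Ioi_norm {F : Type*} [NormedAddCommGroup F] [NormedSpace ℝ F]
    [Nontrivial F] [FiniteDimensional ℝ F] [MeasurableSpace F] [BorelSpace F]
    (μ : Measure F) [μ.IsAddHaarMeasure] (g : ℝ → ℝ) {r₀ : ℝ} (hr₀ : 0 ≤ r₀) :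
    ∫ w, (Ioi r₀).indicator g ‖w‖ ∂μ
      = finrank ℝ F * μ.real (ball 0 1) * ∫ r in Ioi r₀, g r * r ^ (finrank ℝ F - 1) := by
  rw [integral_fun_norm_addHaar μ, nsmul_eq_mul, smul_eq_mul, mul_assoc]
  congr 2
  have hind : ∀ y, y ^ (finrank ℝ F - 1) • (Ioi r₀).indicator g y
      = (Ioi r₀).indicator (fun r => g r * r ^ (finrank ℝ F - 1)) y := fun y => by
    by_cases hy : y ∈ Ioi r₀ <;> simp [hy, mul_comm]
  simp_rw [hind]
  rw [integral_indicator measurableSet_Ioi, Measure.restrict_restrict measurableSet_Ioi,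
    inter_eq_self_of_subset_left (Ioi_subset_Ioi hr₀)]

theorem abs_le_integral_norm_fderiv_of_radial {F : Type*} [NormedAddCommGroup F]
    [NormedSpace ℝ F] [FiniteDimensional ℝ F] [MeasurableSpace F] [BorelSpace F]
    (μ : Measure F) [μ.IsAddHaarMeasure] {v : F → ℝ} (hv : ContDiff ℝ 1 v)
    (hvs : HasCompactSupport v) (hrad : ∀ w w', ‖w‖ = ‖w'‖ → v w = v w') {e : F} (he : ‖e‖ = 1)
    {r₀ : ℝ} (hr₀ : 0 < r₀) :
    |v (r₀ • e)| ≤ (finrank ℝ F * μ.real (ball 0 1) * r₀ ^ (finrank ℝ F - 1))⁻¹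
      * ∫ w, ‖fderiv ℝ v w‖ ∂μ := by
  have he0 : e ≠ 0 := norm_ne_zero_iff.1 (by rw [he]; exact one_ne_zero)
  have : Nontrivial F := nontrivial_of_ne e 0 he0
  set n := finrank ℝ F
  set f : ℝ → ℝ := fun t => v (t • e)
  have hf : ContDiff ℝ 1 f := hv.comp (contDiff_id.smul contDiff_const)
  have hfs : HasCompactSupport f := hvs.comp_isClosedEmbedding (isClosedEmbedding_smul_left he0)
  have hvf : ∀ w, v w = f ‖w‖ := fun w =>
    hrad _ _ (by rw [norm_smul, he, mul_one, norm_norm])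
  have hκ : 0 < n * μ.real (ball 0 1) :=
    mul_pos (Nat.cast_pos.2 finrank_pos)
      (ENNReal.toReal_pos (measure_ball_pos μ 0 one_pos).ne' measure_ball_lt_top.ne)
  have hpolar : n * μ.real (ball 0 1) * ∫ r in Ioi r₀, |deriv f r| * r ^ (n - 1)
      ≤ ∫ w, ‖fderiv ℝ v w‖ ∂μ := by
    rw [← integral_indicator_Ioi_norm μ _ hr₀.le]
    refine integral_mono_of_nonneg (Eventually.of_forall fun w => ?_) ?_
      (Eventually.of_forall fun w => ?_)
    · exact indicator_nonneg (fun _ _ => abs_nonneg _) _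
    · exact (hv.continuous_fderiv one_ne_zero).norm.integrable_of_hasCompactSupport
        (hvs.fderiv ℝ).norm
    · dsimp only
      by_cases hw : ‖w‖ ∈ Ioi r₀
      · rw [indicator_of_mem hw]
        exact abs_deriv_le_norm_fderiv_of_radial hvf
          (norm_pos_iff.1 (hr₀.trans hw)) (hv.differentiable one_ne_zero w)
      · rw [indicator_of_notMem hw]
        exact norm_nonneg _
  calc |v (r₀ • e)| = |f r₀| := rfl
    _ ≤ (r₀ ^ (n - 1))⁻¹ * ∫ r in Ioi r₀, |deriv f r| * r ^ (n - 1) :=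
        abs_le_integral_Ioi_abs_deriv_mul_pow hf hfs hr₀ _
    _ ≤ (n * μ.real (ball 0 1) * r₀ ^ (n - 1))⁻¹ * ∫ w, ‖fderiv ℝ v w‖ ∂μ := by
        rw [mul_inv, mul_comm _ (r₀ ^ (n - 1))⁻¹, mul_assoc]
        gcongr
        rwa [le_inv_mul_iff₀ hκ]

theorem Continuous.eLpNorm_eq_ofReal_integral_rpow {X F : Type*} [TopologicalSpace X]
    [MeasurableSpace X] [OpensMeasurableSpace X] [NormedAddCommGroup F]
    (μ : Measure X) [IsFiniteMeasureOnCompacts μ] {f : X → F} (hf : Continuous f)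
    (hfs : HasCompactSupport f) {p : ℝ≥0} (hp : p ≠ 0) :
    eLpNorm f p μ = ENNReal.ofReal ((∫ x, ‖f x‖ ^ (p : ℝ) ∂μ) ^ (p : ℝ)⁻¹) := by
  simpa using (hf.memLp_of_hasCompactSupport hfs (p := p) (μ := μ)).eLpNorm_eq_integral_rpow_norm
    (by simpa using hp) ENNReal.coe_ne_top

theorem integral_norm_rpow_mul_norm_fderiv_le {E : Type*} [NormedAddCommGroup E]
    [NormedSpace ℝ E] [FiniteDimensional ℝ E] [MeasurableSpace E] [BorelSpace E]
    (μ : Measure E) [μ.IsAddHaarMeasure] {φ : E → ℝ} (hφ : ContDiff ℝ 1 φ)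
    (hφs : HasCompactSupport φ) (hE : 2 < finrank ℝ E) {p : ℝ≥0}
    (hp : (p : ℝ)⁻¹ = 2⁻¹ - (finrank ℝ E : ℝ)⁻¹) :
    ∫ x, ‖φ x‖ ^ ((p : ℝ) / 2) * ‖fderiv ℝ φ x‖ ∂μ
      ≤ (eLpNormLESNormFDerivOfEqInnerConst μ 2 : ℝ) ^ ((p : ℝ) / 2)
        * (∫ x, ‖fderiv ℝ φ x‖ ^ 2 ∂μ) ^ (((p : ℝ) + 2) / 4) := by
  set C : ℝ := ↑(eLpNormLESNormFDerivOfEqInnerConst μ 2)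
  set P := ∫ x, ‖φ x‖ ^ (p : ℝ) ∂μ
  set Q := ∫ x, ‖fderiv ℝ φ x‖ ^ 2 ∂μ
  have hp0 : (0 : ℝ) < p := by
    have : (finrank ℝ E : ℝ)⁻¹ < 2⁻¹ := inv_strictAnti₀ two_pos (by exact_mod_cast hE)
    exact inv_pos.1 (by linarith)
  have hP : 0 ≤ P := integral_nonneg fun x => by positivity
  have hQ : 0 ≤ Q := integral_nonneg fun x => by positivity
  have hDφ : Continuous (fderiv ℝ φ) := hφ.continuous_fderiv one_ne_zero
  have hsobolev : P ^ (p : ℝ)⁻¹ ≤ C * Q ^ (2⁻¹ : ℝ) := by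
    have h := eLpNorm_le_eLpNorm_fderiv_of_eq_inner μ hφ hφs (p := 2) (p' := p) one_le_two
      (by omega) (by simpa using hp)
    rw [hφ.continuous.eLpNorm_eq_ofReal_integral_rpow μ hφs (by simpa using hp0.ne'),
      hDφ.eLpNorm_eq_ofReal_integral_rpow μ (hφs.fderiv ℝ) two_ne_zero,
      ← ENNReal.ofReal_coe_nnreal, ← ENNReal.ofReal_mul (by positivity),
      ENNReal.ofReal_le_ofReal_iff (by positivity)] at h
    simpa [P, Q] using h
  have hholder :
      ∫ x, ‖φ x‖ ^ ((p : ℝ) / 2) * ‖fderiv ℝ φ x‖ ∂μ ≤ P ^ (2⁻¹ : ℝ) * Q ^ (2⁻¹ : ℝ) := by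
    have h := integral_mul_le_Lp_mul_Lq_of_nonneg (μ := μ) Real.HolderConjugate.two_two
      (f := fun x => ‖φ x‖ ^ ((p : ℝ) / 2)) (g := fun x => ‖fderiv ℝ φ x‖)
      (Eventually.of_forall fun x => by positivity) (Eventually.of_forall fun x => by positivity)
      (by simpa using (hφ.continuous.norm.rpow_const fun _ => Or.inr (by positivity))
        |>.memLp_of_hasCompactSupport (hφs.norm.rpow_const (by positivity)))
      (by simpa using hDφ.norm.memLp_of_hasCompactSupport (hφs.fderiv ℝ).norm)
    convert h using 3
    · simp only [P, ← Real.rpow_mul (norm_nonneg _)]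
      ring_nf
    · norm_num
    · simp only [Q, Real.rpow_two]
    · norm_num
  have hC : 0 ≤ C := NNReal.coe_nonneg _
  calc ∫ x, ‖φ x‖ ^ ((p : ℝ) / 2) * ‖fderiv ℝ φ x‖ ∂μ ≤ P ^ (2⁻¹ : ℝ) * Q ^ (2⁻¹ : ℝ) := hholder
    _ = (P ^ (p : ℝ)⁻¹) ^ ((p : ℝ) / 2) * Q ^ (2⁻¹ : ℝ) := by
        rw [← Real.rpow_mul hP]; field_simp
    _ ≤ (C * Q ^ (2⁻¹ : ℝ)) ^ ((p : ℝ) / 2) * Q ^ (2⁻¹ : ℝ) := by gcongr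
    _ = C ^ ((p : ℝ) / 2) * Q ^ (((p : ℝ) + 2) / 4) := by
        rw [Real.mul_rpow hC (by positivity), ← Real.rpow_mul hQ, mul_assoc,
          ← Real.rpow_add' hQ (by positivity)]
        ring_nf

theorem integral_norm_fderiv_norm_rpow_le {E F : Type*} [NormedAddCommGroup E] [NormedSpace ℝ E]
    [MeasurableSpace E] [OpensMeasurableSpace E] [NormedAddCommGroup F] [InnerProductSpace ℝ F]
    (μ : Measure E) [IsFiniteMeasureOnCompacts μ] {φ : E → F} (hφ : ContDiff ℝ 1 φ)
    (hφs : HasCompactSupport φ) {p : ℝ} (hp : 1 < p) :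
    ∫ x, ‖fderiv ℝ (fun x => ‖φ x‖ ^ p) x‖ ∂μ
      ≤ p * ∫ x, ‖φ x‖ ^ (p - 1) * ‖fderiv ℝ φ x‖ ∂μ := by
  rw [← integral_const_mul]
  refine integral_mono_of_nonneg (Eventually.of_forall fun x => norm_nonneg _) ?_
    (Eventually.of_forall fun x => ?_)
  · exact (continuous_const.mul ((hφ.continuous.norm.rpow_const fun _ => Or.inr (by linarith)).mul
      (hφ.continuous_fderiv one_ne_zero).norm)).integrable_of_hasCompactSupport
      ((hφs.norm.rpow_const (by linarith)).mul_right.mul_left)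
  · simpa only [mul_assoc] using norm_fderiv_norm_rpow_le (hφ.differentiable one_ne_zero) hp

section FinCons

variable (n : ℕ)

def finConsMeasurableEquiv : ℝ × EuclideanSpace ℝ (Fin n) ≃ᵐ EuclideanSpace ℝ (Fin (n + 1)) :=
  (MeasurableEquiv.prodCongr (MeasurableEquiv.refl ℝ)
      (MeasurableEquiv.toLp 2 (Fin n → ℝ)).symm).trans
    (((MeasurableEquiv.piFinSuccAbove (fun _ : Fin (n + 1) => ℝ) 0).symm).trans
      (MeasurableEquiv.toLp 2 (Fin (n + 1) → ℝ)))

theorem finConsMeasurableEquiv_apply (z : ℝ) (w : EuclideanSpace ℝ (Fin n)) :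
    finConsMeasurableEquiv n (z, w) = WithLp.toLp 2 (Fin.cons z w.ofLp) := by
  show WithLp.toLp 2 ((0 : Fin (n + 1)).insertNth (α := fun _ => ℝ) z w.ofLp) = _
  rw [Fin.insertNth_zero']

theorem measurePreserving_finConsMeasurableEquiv :
    MeasurePreserving (finConsMeasurableEquiv n) := by
  rw [Measure.volume_eq_prod]
  exact (EuclideanSpace.volume_preserving_symm_measurableEquiv_toLp (Fin (n + 1))).symm.comp
    ((volume_preserving_piFinSuccAbove (fun _ : Fin (n + 1) => ℝ) 0).symm.comp
      ((MeasurePreserving.id volume).prod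
        (EuclideanSpace.volume_preserving_symm_measurableEquiv_toLp (Fin n))))

def finConsZeroIsometry : EuclideanSpace ℝ (Fin n) →ₗᵢ[ℝ] EuclideanSpace ℝ (Fin (n + 1)) where
  toFun w := WithLp.toLp 2 (Fin.cons 0 w.ofLp)
  map_add' x y := by ext i; cases i using Fin.cases <;> simp
  map_smul' c x := by ext i; cases i using Fin.cases <;> simp
  norm_map' w := by simp [EuclideanSpace.norm_eq, Fin.sum_univ_succ]

theorem finConsMeasurableEquiv_right_eq (z : ℝ) :
    (fun w => finConsMeasurableEquiv n (z, w))
      = fun w => finConsMeasurableEquiv n (z, 0) + finConsZeroIsometry n w := by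
  ext w i; cases i using Fin.cases <;> simp [finConsMeasurableEquiv_apply, finConsZeroIsometry]

theorem isometry_finConsMeasurableEquiv_right (z : ℝ) :
    Isometry fun w => finConsMeasurableEquiv n (z, w) := by
  rw [finConsMeasurableEquiv_right_eq]
  exact (IsometryEquiv.addLeft _).isometry.comp (finConsZeroIsometry n).isometry

theorem hasFDerivAt_finConsMeasurableEquiv_right (z : ℝ) (w : EuclideanSpace ℝ (Fin n)) :
    HasFDerivAt (fun w => finConsMeasurableEquiv n (z, w))
      (finConsZeroIsometry n).toContinuousLinearMap w := by
  rw [finConsMeasurableEquiv_right_eq]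
  exact (finConsZeroIsometry n).toContinuousLinearMap.hasFDerivAt.const_add _

theorem contDiff_finConsMeasurableEquiv_right (z : ℝ) :
    ContDiff ℝ 1 fun w => finConsMeasurableEquiv n (z, w) := by
  rw [finConsMeasurableEquiv_right_eq]
  exact contDiff_const.add (finConsZeroIsometry n).toContinuousLinearMap.contDiff

theorem isometry_finConsMeasurableEquiv_left (w : EuclideanSpace ℝ (Fin n)) :
    Isometry fun z : ℝ => finConsMeasurableEquiv n (z, w) :=
  Isometry.of_dist_eq fun z z' => by
    simp [EuclideanSpace.dist_eq, finConsMeasurableEquiv_apply, Fin.sum_univ_succ,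
      Real.dist_eq, Real.sqrt_sq_eq_abs]

theorem integrable_comp_finConsMeasurableEquiv_left {u : EuclideanSpace ℝ (Fin (n + 1)) → ℝ}
    (hu : Continuous u) (hus : HasCompactSupport u)
    (w : EuclideanSpace ℝ (Fin n)) : Integrable fun z => u (finConsMeasurableEquiv n (z, w)) :=
  have hT := (isometry_finConsMeasurableEquiv_left n w).isClosedEmbedding
  (hu.comp hT.continuous).integrable_of_hasCompactSupport (hus.comp_isClosedEmbedding hT)

end FinCons

theorem integral_abs_comp_finCons_le_integral_norm_fderiv (n : ℕ)
    {u : EuclideanSpace ℝ (Fin (n + 1)) → ℝ} (hu : ContDiff ℝ 1 u) (hus : HasCompactSupport u)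
    (hrad : ∀ z (w w' : EuclideanSpace ℝ (Fin n)), ‖w‖ = ‖w'‖ →
      u (finConsMeasurableEquiv n (z, w)) = u (finConsMeasurableEquiv n (z, w')))
    {e : EuclideanSpace ℝ (Fin n)} (he : ‖e‖ = 1) {r₀ : ℝ} (hr₀ : 0 < r₀) :
    ∫ z, |u (finConsMeasurableEquiv n (z, r₀ • e))|
      ≤ (n * volume.real (ball (0 : EuclideanSpace ℝ (Fin n)) 1) * r₀ ^ (n - 1))⁻¹
        * ∫ y, ‖fderiv ℝ u y‖ := by
  set K := (n * volume.real (ball (0 : EuclideanSpace ℝ (Fin n)) 1) * r₀ ^ (n - 1))⁻¹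
  set T := finConsMeasurableEquiv n
  set H : ℝ × EuclideanSpace ℝ (Fin n) → ℝ := fun p => ‖fderiv ℝ u (T p)‖
  have hDu : Continuous fun y => ‖fderiv ℝ u y‖ := (hu.continuous_fderiv one_ne_zero).norm
  have hH : Integrable H (volume.prod volume) := by
    rw [← Measure.volume_eq_prod]
    exact ((measurePreserving_finConsMeasurableEquiv n).integrable_comp_emb
      T.measurableEmbedding).2 (hDu.integrable_of_hasCompactSupport (hus.fderiv ℝ).norm)
  have hslice : ∀ z, |u (T (z, r₀ • e))| ≤ K * ∫ w, H (z, w) := fun z => by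
    have hTemb := (isometry_finConsMeasurableEquiv_right n z).isClosedEmbedding
    have h := abs_le_integral_norm_fderiv_of_radial volume
      (hu.comp (contDiff_finConsMeasurableEquiv_right n z)) (hus.comp_isClosedEmbedding hTemb)
      (hrad z) he hr₀
    rw [finrank_euclideanSpace_fin] at h
    refine h.trans (mul_le_mul_of_nonneg_left ?_ (by positivity : (0 : ℝ) ≤ K))
    refine integral_mono_of_nonneg (Eventually.of_forall fun w => ?_)
      ((hDu.comp hTemb.continuous).integrable_of_hasCompactSupport
        ((hus.fderiv ℝ).norm.comp_isClosedEmbedding hTemb)) (Eventually.of_forall fun w => ?_)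
    · exact norm_nonneg _
    · dsimp only
      rw [((hu.differentiable one_ne_zero _).hasFDerivAt.comp w
        (hasFDerivAt_finConsMeasurableEquiv_right n z w)).fderiv]
      exact (ContinuousLinearMap.opNorm_comp_le _ _).trans <| mul_le_of_le_one_right
        (norm_nonneg _) (finConsZeroIsometry n).norm_toContinuousLinearMap_le
  calc ∫ z, |u (T (z, r₀ • e))| ≤ ∫ z, K * ∫ w, H (z, w) :=
        integral_mono_of_nonneg (Eventually.of_forall fun z => abs_nonneg _)
          (hH.integral_prod_left.const_mul K) (Eventually.of_forall hslice)
    _ = K * ∫ y, ‖fderiv ℝ u y‖ := by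
        rw [integral_const_mul, ← integral_prod H hH, ← Measure.volume_eq_prod,
          (measurePreserving_finConsMeasurableEquiv n).integral_comp' fun y => ‖fderiv ℝ u y‖]

theorem rho5_finConsMeasurableEquiv (z : ℝ) (w : EuclideanSpace ℝ (Fin 4)) :
    rho5 (finConsMeasurableEquiv 4 (z, w)) = ‖w‖ := by
  rw [rho5, EuclideanSpace.norm_eq, Fin.sum_univ_four]
  simp only [finConsMeasurableEquiv_apply, Real.norm_eq_abs, sq_abs]
  rfl

theorem pt5_eq_finConsMeasurableEquiv (z r : ℝ) :
    pt5 z ![r, 0, 0, 0] = finConsMeasurableEquiv 4 (z, r • EuclideanSpace.single 0 1) := by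
  ext i
  cases i using Fin.cases with
  | zero => rfl
  | succ j =>
    simp only [pt5, finConsMeasurableEquiv_apply, WithLp.equiv_symm_apply, Fin.cons_succ]
    fin_cases j <;> simp

theorem eq_of_norm_eq_of_axisymmetric {φ : E5 → ℝ}
    (hax : ∀ y y' : E5, y 0 = y' 0 → rho5 y = rho5 y' → φ y = φ y') (z : ℝ)
    {w w' : EuclideanSpace ℝ (Fin 4)} (h : ‖w‖ = ‖w'‖) :
    φ (finConsMeasurableEquiv 4 (z, w)) = φ (finConsMeasurableEquiv 4 (z, w')) :=
  hax _ _ (by simp [finConsMeasurableEquiv_apply])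
    (by rw [rho5_finConsMeasurableEquiv, rho5_finConsMeasurableEquiv, h])

theorem integral_norm_fderiv_sq_eq_setIntegral_gradsq5 {φ : E5 → ℝ} {R : ℝ}
    (hsupp : ∀ y : E5, y ∉ ball (0 : E5) R → φ y = 0) :
    ∫ y, ‖fderiv ℝ φ y‖ ^ 2 = ∫ y in ball (0 : E5) R, gradsq5 φ y := by
  have hgrad : ∀ y, gradsq5 φ y = ‖fderiv ℝ φ y‖ ^ 2 := fun y => by
    simp [gradsq5, (EuclideanSpace.basisFun (Fin 5) ℝ).norm_dual]
  simp_rw [hgrad]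
  refine (setIntegral_eq_integral_of_ae_compl_eq_zero ?_).symm
  have hsphere : ∀ᵐ y : E5, y ∉ sphere (0 : E5) R :=
    measure_eq_zero_iff_ae_notMem.1 (Measure.addHaar_sphere volume 0 R)
  filter_upwards [hsphere] with y hy hyball
  have hR : R < ‖y‖ := by
    simp only [mem_ball, mem_sphere, dist_zero_right] at hy hyball
    exact lt_of_le_of_ne (not_lt.1 hyball) (Ne.symm hy)
  have hzero : φ =ᶠ[𝓝 y] fun _ => 0 := by
    filter_upwards [(isOpen_lt continuous_const continuous_norm).mem_nhds hR] with x hx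
    exact hsupp x (by simpa using hx.le)
  simp [hzero.fderiv_eq]

theorem integral_norm_rpow_slice_le {R : ℝ} {φ : E5 → ℝ} (hφ : ContDiff ℝ 1 φ)
    (hφs : HasCompactSupport φ) (hsupp : ∀ y : E5, y ∉ ball (0 : E5) R → φ y = 0)
    (hax : ∀ y y' : E5, y 0 = y' 0 → rho5 y = rho5 y' → φ y = φ y') {r₀ : ℝ} (hr₀ : 0 < r₀) :
    ∫ z, ‖φ (pt5 z ![r₀, 0, 0, 0])‖ ^ (8 / 3 : ℝ)
      ≤ (4 * volume.real (ball (0 : EuclideanSpace ℝ (Fin 4)) 1) * r₀ ^ 3)⁻¹ * (8 / 3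
        * ((eLpNormLESNormFDerivOfEqInnerConst (volume : Measure E5) 2 : ℝ) ^ (5 / 3 : ℝ)
          * (∫ y in ball (0 : E5) R, gradsq5 φ y) ^ (4 / 3 : ℝ))) := by
  set u : E5 → ℝ := fun y => ‖φ y‖ ^ (8 / 3 : ℝ)
  have hslice := integral_abs_comp_finCons_le_integral_norm_fderiv 4 (u := u)
    (hφ.norm_rpow (by norm_num)) (hφs.norm.rpow_const (by norm_num))
    (fun z w w' h => by simp only [u, eq_of_norm_eq_of_axisymmetric hax z h])
    (e := EuclideanSpace.single 0 1) (by simp) hr₀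
  have hDu := integral_norm_fderiv_norm_rpow_le volume hφ hφs (p := 8 / 3) (by norm_num)
  have hSobolev := integral_norm_rpow_mul_norm_fderiv_le volume hφ hφs (p := 10 / 3)
    (by simp) (by rw [finrank_euclideanSpace_fin]; norm_num)
  rw [integral_norm_fderiv_sq_eq_setIntegral_gradsq5 hsupp] at hSobolev
  simp_rw [pt5_eq_finConsMeasurableEquiv]
  refine (le_of_eq (integral_congr_ae (Eventually.of_forall fun z => ?_))).trans
    (hslice.trans ?_)
  · exact (abs_of_nonneg (by positivity)).symm
  norm_num at hDu hSobolev ⊢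
  gcongr
  exact hDu.trans (by gcongr)

def axisymmetricDecayConst : ℝ :=
  2 ^ (8 / 3 : ℝ) * (8 / 3)
    * (eLpNormLESNormFDerivOfEqInnerConst (volume : Measure E5) 2 : ℝ) ^ (5 / 3 : ℝ)
    / (4 * volume.real (ball (0 : EuclideanSpace ℝ (Fin 4)) 1))

theorem volume_superlevel_slice_le {R : ℝ} {φ : E5 → ℝ} (hφ : ContDiff ℝ 1 φ)
    (hsupp : ∀ y : E5, y ∉ ball (0 : E5) R → φ y = 0)
    (hax : ∀ y y' : E5, y 0 = y' 0 → rho5 y = rho5 y' → φ y = φ y') {r₀ : ℝ} (hr₀ : 0 < r₀) :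
    volume {z : ℝ | 1 / 2 ≤ φ (pt5 z ![r₀, 0, 0, 0])}
      ≤ ENNReal.ofReal (axisymmetricDecayConst / r₀ ^ 3 *
          (∫ y in ball (0 : E5) R, gradsq5 φ y) ^ ((4 : ℝ) / 3)) := by
  have hφs : HasCompactSupport φ := HasCompactSupport.intro (isCompact_closedBall 0 R)
    fun y hy => hsupp y fun h => hy (ball_subset_closedBall h)
  set g : ℝ → ℝ := fun z => ‖φ (pt5 z ![r₀, 0, 0, 0])‖ ^ (8 / 3 : ℝ)
  have hg : Integrable g := by
    simp_rw [g, pt5_eq_finConsMeasurableEquiv]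
    exact integrable_comp_finConsMeasurableEquiv_left 4
      (hφ.continuous.norm.rpow_const fun _ => Or.inr (by norm_num))
      (hφs.norm.rpow_const (by norm_num)) _
  have hsub : {z : ℝ | 1 / 2 ≤ φ (pt5 z ![r₀, 0, 0, 0])} ⊆ {z | (1 / 2) ^ (8 / 3 : ℝ) ≤ g z} :=
    fun z hz => Real.rpow_le_rpow (by norm_num) (le_trans hz (Real.le_norm_self _)) (by norm_num)
  refine (measure_mono hsub).trans ((meas_ge_le_ofReal_integral_div hg
    (Eventually.of_forall fun z => by positivity) (by positivity)).trans
    (ENNReal.ofReal_le_ofReal ?_))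
  have hhalf : ((1 : ℝ) / 2) ^ (8 / 3 : ℝ) = (2 ^ (8 / 3 : ℝ))⁻¹ := by
    rw [one_div, Real.inv_rpow zero_le_two]
  have hκ : 0 < 4 * volume.real (ball (0 : EuclideanSpace ℝ (Fin 4)) 1) :=
    mul_pos four_pos (ENNReal.toReal_pos (measure_ball_pos _ 0 one_pos).ne' measure_ball_lt_top.ne)
  rw [hhalf, div_inv_eq_mul, mul_comm]
  refine (mul_le_mul_of_nonneg_left (integral_norm_rpow_slice_le hφ hφs hsupp hax hr₀)
    (by positivity)).trans (le_of_eq ?_)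
  simp only [axisymmetricDecayConst]
  field_simp

theorem axisymmetricDecayConst_nonneg : 0 ≤ axisymmetricDecayConst := by
  unfold axisymmetricDecayConst; positivity

/-- Measure decay for axisymmetric functions in `H¹₀` of a ball `B ⊂ ℝ⁵`: there is a
constant `C` such that `|{z : φ(z, r₀) ≥ 1/2}| ≤ C r₀⁻³ ‖φ‖_{H¹₀(B)}^{8/3}` for every
axisymmetric `φ ∈ H¹₀(B)` and every `r₀ > 0`. -/
theorem stmt18 :
    ∃ C > (0 : ℝ), ∀ R : ℝ, 0 < R → ∀ φ : E5 → ℝ, ContDiff ℝ 1 φ →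
      (∀ y : E5, y ∉ Metric.ball (0 : E5) R → φ y = 0) →
      (∀ y y' : E5, y 0 = y' 0 → rho5 y = rho5 y' → φ y = φ y') →
      ∀ r₀ : ℝ, 0 < r₀ →
        volume {z : ℝ | 1 / 2 ≤ φ (pt5 z ![r₀, 0, 0, 0])}
          ≤ ENNReal.ofReal (C / r₀ ^ 3 *
              (∫ y in Metric.ball (0 : E5) R, gradsq5 φ y) ^ ((4 : ℝ) / 3)) := by
  -- `+ 1`: the Sobolev constant inside `axisymmetricDecayConst` is only known to be nonnegative.
  refine ⟨axisymmetricDecayConst + 1, by linarith [axisymmetricDecayConst_nonneg],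
    fun R _ φ hφ hsupp hax r₀ hr₀ => ?_⟩
  have hG : 0 ≤ ∫ y in ball (0 : E5) R, gradsq5 φ y :=
    setIntegral_nonneg measurableSet_ball fun y _ => Finset.sum_nonneg fun i _ => sq_nonneg _
  refine (volume_superlevel_slice_le hφ hsupp hax hr₀).trans (ENNReal.ofReal_le_ofReal ?_)
  gcongr
  linarith
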